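/- arXiv:2603.13300 — 5 statements merged into one kernel-verified Lean document; each statement's English description precedes it below -/
import Mathlib

section
/- Let d, N be positive integers, σ > 0, y₁,…,y_N ∈ ℝ^d, and let E(x) = k_σ(x,x) + N⁻² ∑_{i,j} k_σ(y_i,y_j) − (2/N) ∑_i k_σ(x,y_i) be the MMD potential with Z(x) = N⁻¹ ∑_i k_σ(x,y_i) and w_i(x) = k_σ(x,y_i)/(N·Z(x)). Then for every λ > 0 and every z ∈ ℝ^d, the scaled MMD gradient λ·∇E(z) equals a positive scalar multiple of the Safe Denoiser repellency direction z − ∑_{i=1}^N w_i(z)·y_i; explicitly, λ·∇E(z) = (2λ·Z(z)/σ²) · (z − ∑_{i=1}^N w_i(z) y_i), and 2λ·Z(z)/σ² > 0. -/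
/-!
Since `k(x, x) = 1`, the MMD potential is a constant minus `(2/N) ∑ᵢ k(x, yᵢ)`, and the Gaussian
kernel satisfies `∇ₓ k(x, c) = -(k(x, c)/σ²) (x - c)`. Hence
`∇E(z) = (2/(Nσ²)) ∑ᵢ k(z, yᵢ) (z - yᵢ)`; pulling out the total mass `∑ᵢ k(z, yᵢ) = N Z(z) > 0`
turns the sum into the normalized repellency direction `z - ∑ᵢ wᵢ(z) yᵢ`.
-/

/-- The RBF (Gaussian) kernel on `ℝ^d` with bandwidth `σ`. -/
noncomputable def rbfKernel {d : ℕ} (σ : ℝ) (x y : EuclideanSpace ℝ (Fin d)) : ℝ :=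
  Real.exp (-‖x - y‖ ^ 2 / (2 * σ ^ 2))

section Gradient

variable {F ι : Type*} [NormedAddCommGroup F] [InnerProductSpace ℝ F] [CompleteSpace F]
  {f : F → ℝ} {f' x : F}

theorem HasGradientAt.const_mul (c : ℝ) (hf : HasGradientAt f f' x) :
    HasGradientAt (fun y => c * f y) (c • f') x := by
  rw [hasGradientAt_iff_hasFDerivAt, map_smul] at *
  exact hf.const_mul c

theorem HasGradientAt.const_sub (c : ℝ) (hf : HasGradientAt f f' x) :
    HasGradientAt (fun y => c - f y) (-f') x := by
  rw [hasGradientAt_iff_hasFDerivAt, map_neg] at *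
  exact hf.const_sub c

theorem HasGradientAt.fun_sum {s : Finset ι} {g : ι → F → ℝ} {g' : ι → F}
    (hg : ∀ i ∈ s, HasGradientAt (g i) (g' i) x) :
    HasGradientAt (fun y => ∑ i ∈ s, g i y) (∑ i ∈ s, g' i) x := by
  rw [hasGradientAt_iff_hasFDerivAt, map_sum]
  exact HasFDerivAt.fun_sum fun i hi => (hg i hi).hasFDerivAt

end Gradient

theorem Finset.sum_smul_sub_eq_smul_sub_sum_div {K V ι : Type*} [Field K] [AddCommGroup V]
    [Module K V] (s : Finset ι) (a : ι → K) (y : ι → V) (z : V) (ha : ∑ i ∈ s, a i ≠ 0) :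
    ∑ i ∈ s, a i • (z - y i) = (∑ i ∈ s, a i) • (z - ∑ i ∈ s, (a i / ∑ j ∈ s, a j) • y i) := by
  simp only [smul_sub, Finset.sum_sub_distrib, Finset.smul_sum, smul_smul, ← Finset.sum_smul,
    mul_div_cancel₀ _ ha]

section RBF

variable {d : ℕ} (σ : ℝ)

theorem rbfKernel_self (x : EuclideanSpace ℝ (Fin d)) : rbfKernel σ x x = 1 := by
  simp [rbfKernel]

theorem rbfKernel_pos (x y : EuclideanSpace ℝ (Fin d)) : 0 < rbfKernel σ x y :=
  Real.exp_pos _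

theorem hasGradientAt_rbfKernel (c z : EuclideanSpace ℝ (Fin d)) :
    HasGradientAt (rbfKernel σ · c) (-(rbfKernel σ z c / σ ^ 2) • (z - c)) z := by
  rw [hasGradientAt_iff_hasFDerivAt]
  simp only [rbfKernel, div_eq_mul_inv]
  refine (((hasFDerivAt_id z).sub_const c).norm_sq.neg.mul_const (2 * σ ^ 2)⁻¹).exp.congr_fderiv
    ?_
  ext t
  simp [real_inner_comm t]
  ring

theorem hasGradientAt_sum_rbfKernel {ι : Type*} (s : Finset ι) (y : ι → EuclideanSpace ℝ (Fin d))
    (z : EuclideanSpace ℝ (Fin d)) :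
    HasGradientAt (fun x => ∑ i ∈ s, rbfKernel σ x (y i))
      (-(σ ^ 2)⁻¹ • ∑ i ∈ s, rbfKernel σ z (y i) • (z - y i)) z := by
  convert HasGradientAt.fun_sum fun i _ => hasGradientAt_rbfKernel σ (y i) z using 1
  simp only [Finset.smul_sum, smul_smul]
  congr! 2
  ring

end RBF

theorem stmt_1_general (d N : ℕ) (hN : 0 < N) (σ : ℝ) (hσ : 0 < σ)
    (y : Fin N → EuclideanSpace ℝ (Fin d))
    (E : EuclideanSpace ℝ (Fin d) → ℝ)
    (hE : ∀ x, E x = rbfKernel σ x x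
      + ((N : ℝ))⁻¹ ^ 2 * ∑ i, ∑ j, rbfKernel σ (y i) (y j)
      - (2 / (N : ℝ)) * ∑ i, rbfKernel σ x (y i))
    (Z : EuclideanSpace ℝ (Fin d) → ℝ)
    (hZ : ∀ x, Z x = ((N : ℝ))⁻¹ * ∑ i, rbfKernel σ x (y i))
    (w : Fin N → EuclideanSpace ℝ (Fin d) → ℝ)
    (hw : ∀ i x, w i x = rbfKernel σ x (y i) / ((N : ℝ) * Z x))
    (lam : ℝ) (hlam : 0 < lam) :
    ∀ z : EuclideanSpace ℝ (Fin d),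
      lam • gradient E z = (2 * lam * Z z / σ ^ 2) • (z - ∑ i, w i z • y i) ∧
      0 < 2 * lam * Z z / σ ^ 2 := by
  intro z
  have hmass : (N : ℝ) * Z z = ∑ i, rbfKernel σ z (y i) := by
    rw [hZ, mul_inv_cancel_left₀ (by positivity)]
  have hmass_pos : 0 < ∑ i, rbfKernel σ z (y i) :=
    Finset.sum_pos (fun i _ => rbfKernel_pos σ z (y i)) (Finset.univ_nonempty_iff.mpr ⟨⟨0, hN⟩⟩)
  have hZpos : 0 < Z z := by
    rw [hZ]
    positivity
  have hEeq : E = fun x => (1 + ((N : ℝ))⁻¹ ^ 2 * ∑ i, ∑ j, rbfKernel σ (y i) (y j))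
      - (2 / (N : ℝ)) * ∑ i, rbfKernel σ x (y i) := by
    funext x
    rw [hE, rbfKernel_self]
  have hgrad : gradient E z = (2 / (N * σ ^ 2)) • ∑ i, rbfKernel σ z (y i) • (z - y i) := by
    rw [hEeq, (((hasGradientAt_sum_rbfKernel σ Finset.univ y z).const_mul (2 / N)).const_sub
      _).gradient]
    module
  refine ⟨?_, by positivity⟩
  simp only [hgrad, hw, hmass]
  rw [Finset.sum_smul_sub_eq_smul_sub_sum_div _ _ _ _ hmass_pos.ne', ← hmass, smul_smul, smul_smul]
  congr 1
  field_simp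

/-- Safe Denoiser as MMD-gradient guidance: the scaled MMD gradient `λ·∇E(z)` equals the
positive scalar `2λ·Z(z)/σ²` times the Safe Denoiser repellency direction
`z − ∑_i w_i(z)·y_i`. -/
theorem stmt_1 (d N : ℕ) (hd : 0 < d) (hN : 0 < N) (σ : ℝ) (hσ : 0 < σ)
    (y : Fin N → EuclideanSpace ℝ (Fin d))
    (E : EuclideanSpace ℝ (Fin d) → ℝ)
    (hE : ∀ x, E x = rbfKernel σ x x
      + ((N : ℝ))⁻¹ ^ 2 * ∑ i, ∑ j, rbfKernel σ (y i) (y j)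
      - (2 / (N : ℝ)) * ∑ i, rbfKernel σ x (y i))
    (Z : EuclideanSpace ℝ (Fin d) → ℝ)
    (hZ : ∀ x, Z x = ((N : ℝ))⁻¹ * ∑ i, rbfKernel σ x (y i))
    (w : Fin N → EuclideanSpace ℝ (Fin d) → ℝ)
    (hw : ∀ i x, w i x = rbfKernel σ x (y i) / ((N : ℝ) * Z x))
    (lam : ℝ) (hlam : 0 < lam) :
    ∀ z : EuclideanSpace ℝ (Fin d),
      lam • gradient E z = (2 * lam * Z z / σ ^ 2) • (z - ∑ i, w i z • y i) ∧
      0 < 2 * lam * Z z / σ ^ 2 :=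
  stmt_1_general d N hN σ hσ y E hE Z hZ w hw lam hlam
end

section
/- Let α, λ, r, d₀ be positive reals with 0 < d₀ < r and α·(r − d₀)·d₀/(4λ) < e⁻¹. Then there exists a unique σ ≥ d₀/√2 (equivalently, a unique σ with d₀²/(2σ²) ≤ 1) satisfying α·(r − d₀) = λ·(2d₀/σ²)·exp(−d₀²/(2σ²)). If instead α·(r − d₀)·d₀/(4λ) = e⁻¹, then σ = d₀/√2 is the unique such solution. -/
/-!
With `u = d₀² / (2σ²)` the matching equation reads `α(r − d₀)d₀ / (4λ) = u e⁻ᵘ`, and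
`σ ≥ d₀/√2` means exactly `u ∈ (0, 1]`. On `[0, 1]` the map `u ↦ u e⁻ᵘ` increases strictly from
`0` to `e⁻¹`, so the equation has exactly one solution there when the left side lies in
`(0, e⁻¹]`, and that solution is `u = 1`, i.e. `σ = d₀/√2`, when it equals `e⁻¹`.
-/

open Real Set

lemma hasDerivAt_mul_exp_neg (t : ℝ) :
    HasDerivAt (fun t => t * exp (-t)) ((1 - t) * exp (-t)) t :=
  ((hasDerivAt_id' t).mul (hasDerivAt_neg t).exp).congr_deriv (by ring)

lemma strictMonoOn_mul_exp_neg : StrictMonoOn (fun t : ℝ => t * exp (-t)) (Icc 0 1) := by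
  refine strictMonoOn_of_deriv_pos (convex_Icc 0 1) (by fun_prop) fun t ht => ?_
  rw [interior_Icc] at ht
  rw [(hasDerivAt_mul_exp_neg t).deriv]
  exact mul_pos (by linarith [ht.2]) (exp_pos _)

lemma surjOn_mul_exp_neg : SurjOn (fun t : ℝ => t * exp (-t)) (Icc 0 1) (Icc 0 (exp (-1))) := by
  simpa [SurjOn] using intermediate_value_Icc zero_le_one
    (by fun_prop : ContinuousOn (fun t : ℝ => t * exp (-t)) (Icc 0 1))

section Bandwidth

variable {d₀ : ℝ}

lemma sq_div_two_mul_sq_mem_Ioc (hd₀ : 0 < d₀) {σ : ℝ} (hσ : d₀ / √2 ≤ σ) :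
    d₀ ^ 2 / (2 * σ ^ 2) ∈ Ioc 0 1 := by
  have hσ₀ : 0 < d₀ / √2 := by positivity
  have hsq : d₀ ^ 2 / 2 ≤ σ ^ 2 := by
    calc d₀ ^ 2 / 2 = (d₀ / √2) ^ 2 := by rw [div_pow, sq_sqrt zero_le_two]
      _ ≤ σ ^ 2 := pow_le_pow_left₀ hσ₀.le hσ 2
  have hσpos : 0 < σ := hσ₀.trans_le hσ
  exact ⟨by positivity, (div_le_one (by positivity)).2 (by linarith)⟩

lemma injOn_sq_div_two_mul_sq (hd₀ : d₀ ≠ 0) :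
    InjOn (fun σ : ℝ => d₀ ^ 2 / (2 * σ ^ 2)) (Ioi 0) := by
  intro σ₁ hσ₁ σ₂ hσ₂ h
  have : σ₁ ^ 2 = σ₂ ^ 2 := by
    simpa [div_eq_div_iff, hd₀, (mem_Ioi.1 hσ₁).ne', (mem_Ioi.1 hσ₂).ne'] using h.symm
  exact (pow_left_inj₀ (le_of_lt hσ₁) (le_of_lt hσ₂) two_ne_zero).1 this

lemma exists_sq_div_two_mul_sq_eq (hd₀ : 0 < d₀) {t : ℝ} (ht : t ∈ Ioc 0 1) :
    ∃ σ, d₀ / √2 ≤ σ ∧ d₀ ^ 2 / (2 * σ ^ 2) = t := by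
  have h2t : 0 < 2 * t := by linarith [ht.1]
  refine ⟨d₀ / √(2 * t), ?_, ?_⟩
  · exact div_le_div_of_nonneg_left hd₀.le (sqrt_pos.2 h2t) (sqrt_le_sqrt (by linarith [ht.2]))
  · rw [div_pow, sq_sqrt h2t.le]
    field_simp

end Bandwidth

/-- The MMD-guidance term at distance `d₀` for kernel bandwidth `σ`, matched against the
repellency `α(r − d₀)`. -/
noncomputable def mmdPull (lam d₀ σ : ℝ) : ℝ :=
  lam * (2 * d₀ / σ ^ 2) * exp (-d₀ ^ 2 / (2 * σ ^ 2))

section MmdPull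

variable {lam d₀ : ℝ}

lemma mmdPull_eq (lam : ℝ) (hd₀ : d₀ ≠ 0) (σ : ℝ) :
    mmdPull lam d₀ σ =
      4 * lam / d₀ * (d₀ ^ 2 / (2 * σ ^ 2) * exp (-(d₀ ^ 2 / (2 * σ ^ 2)))) := by
  rw [mmdPull, neg_div]
  rcases eq_or_ne σ 0 with rfl | hσ
  · simp
  · field_simp
    ring

lemma mmdPull_div_sqrt_two (lam : ℝ) (hd₀ : d₀ ≠ 0) :
    mmdPull lam d₀ (d₀ / √2) = 4 * lam / d₀ * exp (-1) := by
  have hu : d₀ ^ 2 / (2 * (d₀ / √2) ^ 2) = 1 := by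
    rw [div_pow, sq_sqrt zero_le_two]
    field_simp
  rw [mmdPull_eq lam hd₀, hu, one_mul]

lemma injOn_mmdPull (hlam : lam ≠ 0) (hd₀ : 0 < d₀) :
    InjOn (mmdPull lam d₀) (Ici (d₀ / √2)) := by
  intro σ₁ hσ₁ σ₂ hσ₂ h
  have hu₁ := sq_div_two_mul_sq_mem_Ioc hd₀ hσ₁
  have hu₂ := sq_div_two_mul_sq_mem_Ioc hd₀ hσ₂
  rw [mmdPull_eq lam hd₀.ne', mmdPull_eq lam hd₀.ne'] at h
  have hu := strictMonoOn_mul_exp_neg.injOn (Ioc_subset_Icc_self hu₁) (Ioc_subset_Icc_self hu₂)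
    (mul_left_cancel₀ (by positivity) h)
  have hσ₀ : 0 < d₀ / √2 := by positivity
  exact injOn_sq_div_two_mul_sq hd₀.ne' (hσ₀.trans_le hσ₁) (hσ₀.trans_le hσ₂) hu

lemma exists_mmdPull_eq (hlam : 0 < lam) (hd₀ : 0 < d₀) {A : ℝ} (hA : 0 < A)
    (hle : A * d₀ / (4 * lam) ≤ exp (-1)) : ∃ σ, d₀ / √2 ≤ σ ∧ A = mmdPull lam d₀ σ := by
  obtain ⟨t, ht, hte : t * exp (-t) = A * d₀ / (4 * lam)⟩ :=
    surjOn_mul_exp_neg ⟨by positivity, hle⟩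
  have ht₀ : 0 < t := by
    refine ht.1.lt_of_ne fun h => ?_
    subst h
    simp only [zero_mul] at hte
    exact (by positivity : (0 : ℝ) < A * d₀ / (4 * lam)).ne hte
  obtain ⟨σ, hσ, hσt⟩ := exists_sq_div_two_mul_sq_eq hd₀ ⟨ht₀, ht.2⟩
  refine ⟨σ, hσ, ?_⟩
  rw [mmdPull_eq lam hd₀.ne', hσt, hte]
  field_simp

end MmdPull

/-- Radius–bandwidth matching (uniqueness): if `α(r − d₀)d₀/(4λ) < e⁻¹`, there is a unique
`σ ≥ d₀/√2` (equivalently, a unique `σ` with `d₀²/(2σ²) ≤ 1`) satisfying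
`α(r − d₀) = λ·(2d₀/σ²)·exp(−d₀²/(2σ²))`; and if `α(r − d₀)d₀/(4λ) = e⁻¹`, then
`σ = d₀/√2` is the unique such solution. -/
theorem stmt_6 (α lam r d₀ : ℝ) (hα : 0 < α) (hlam : 0 < lam)
    (hd₀ : 0 < d₀) (hd₀r : d₀ < r) :
    (α * (r - d₀) * d₀ / (4 * lam) < Real.exp (-1) →
      ∃! σ : ℝ, d₀ / Real.sqrt 2 ≤ σ ∧
        α * (r - d₀) = lam * (2 * d₀ / σ ^ 2) * Real.exp (-d₀ ^ 2 / (2 * σ ^ 2))) ∧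
    (α * (r - d₀) * d₀ / (4 * lam) = Real.exp (-1) →
      (α * (r - d₀) = lam * (2 * d₀ / (d₀ / Real.sqrt 2) ^ 2) *
          Real.exp (-d₀ ^ 2 / (2 * (d₀ / Real.sqrt 2) ^ 2))) ∧
      ∀ σ : ℝ, d₀ / Real.sqrt 2 ≤ σ →
        α * (r - d₀) = lam * (2 * d₀ / σ ^ 2) * Real.exp (-d₀ ^ 2 / (2 * σ ^ 2)) →
        σ = d₀ / Real.sqrt 2) := by
  have hA : 0 < α * (r - d₀) := mul_pos hα (sub_pos.2 hd₀r)
  have hinj := injOn_mmdPull hlam.ne' hd₀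
  refine ⟨fun hlt => ?_, fun heq => ?_⟩
  · obtain ⟨σ, hσ, hσA⟩ := exists_mmdPull_eq hlam hd₀ hA hlt.le
    exact ⟨σ, ⟨hσ, hσA⟩, fun τ ⟨hτ, hτA⟩ => hinj hτ hσ (hτA.symm.trans hσA)⟩
  · have hcrit : α * (r - d₀) = mmdPull lam d₀ (d₀ / √2) := by
      rw [mmdPull_div_sqrt_two lam hd₀.ne', ← heq]
      field_simp
    exact ⟨hcrit, fun σ hσ hσA => hinj hσ self_mem_Ici (hσA.symm.trans hcrit)⟩
end

section
/- Forward-time critical window (sufficient certificate). Let d be a positive integer, s_c ∈ (0, 1], μ > 0, δ > 0. Let h, E : ℝ^d → ℝ be continuously differentiable, let f̃ : [0, 1] × ℝ^d → ℝ^d be continuous, let β, L : [0, s_c] → ℝ be continuous and nonnegative, and let x : [0, s_c] → ℝ^d be differentiable with x'(s) = f̃(s, x(s)) + β(s)·∇E(x(s)) for all s ∈ [0, s_c]. Suppose that for all s ∈ [0, s_c]: (i) ⟨∇h(x(s)), ∇E(x(s))⟩ ≥ μ (alignment), and (ii) ⟨∇h(x(s)), f̃(s, x(s))⟩ ≥ L(s)·h(x(s))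 (the drift bound used along the trajectory). If exp(∫₀^{s_c} L(τ) dτ)·h(x(0)) + μ·∫₀^{s_c} exp(∫_u^{s_c} L(τ) dτ)·β(u) du ≥ δ, then h(x(s_c)) ≥ δ. -/
/-!
With `A(s) = ∫₀ˢ L`, alignment and the drift bound give `(h ∘ x)' ≥ L · (h ∘ x) + μ β`, so
the integrating factor makes `e^{-A(s)} h(x(s)) - μ ∫₀ˢ e^{-A(u)} β(u) du` nondecreasing.
Comparing its values at the endpoints and multiplying by `e^{A(s_c)}` gives
`h(x(s_c)) ≥ e^{A(s_c)} h(x(0)) + μ Ī_L(β) ≥ δ`.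
-/

open scoped RealInnerProductSpace

open Real Set intervalIntegral

section

variable {f : ℝ → ℝ} {a b : ℝ}

theorem ContinuousOn.continuousOn_primitive_of_le (hf : ContinuousOn f (Icc a b)) (hab : a ≤ b) :
    ContinuousOn (fun u => ∫ t in a..u, f t) (Icc a b) := by
  rw [← uIcc_of_le hab] at hf ⊢
  exact continuousOn_primitive_interval (hf.integrableOn_compact isCompact_uIcc)

theorem ContinuousOn.hasDerivAt_primitive (hf : ContinuousOn f (Icc a b)) {s : ℝ}
    (hs : s ∈ Ioo a b) : HasDerivAt (fun u => ∫ t in a..u, f t) (f s) s :=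
  integral_hasDerivAt_right
    ((hf.mono (Icc_subset_Icc_right hs.2.le)).intervalIntegrable_of_Icc hs.1.le)
    ((hf.mono Ioo_subset_Icc_self).stronglyMeasurableAtFilter isOpen_Ioo s hs)
    (hf.continuousAt (Icc_mem_nhds hs.1 hs.2))

theorem exp_integral_mul_add_integral_le_of_hasDerivAt {g g' L c : ℝ → ℝ}
    (hab : a ≤ b) (hL : ContinuousOn L (Icc a b)) (hc : ContinuousOn c (Icc a b))
    (hg : ContinuousOn g (Icc a b)) (hg' : ∀ s ∈ Ioo a b, HasDerivAt g (g' s) s)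
    (hbound : ∀ s ∈ Ioo a b, L s * g s + c s ≤ g' s) :
    exp (∫ t in a..b, L t) * g a + ∫ u in a..b, exp (∫ t in u..b, L t) * c u ≤ g b := by
  set A : ℝ → ℝ := fun u => ∫ t in a..u, L t
  set B : ℝ → ℝ := fun u => ∫ t in a..u, exp (-A t) * c t
  have hA : ContinuousOn A (Icc a b) := hL.continuousOn_primitive_of_le hab
  have hBc : ContinuousOn (fun u => exp (-A u) * c u) (Icc a b) := hA.neg.rexp.mul hc
  have hmono : MonotoneOn (fun s => exp (-A s) * g s - B s) (Icc a b) := by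
    refine monotoneOn_of_hasDerivWithinAt_nonneg
      (f' := fun s => exp (-A s) * (g' s - L s * g s - c s)) (convex_Icc a b)
      ((hA.neg.rexp.mul hg).sub (hBc.continuousOn_primitive_of_le hab))
      (fun s hs => ?_) (fun s hs => ?_) <;> rw [interior_Icc] at hs
    · have hexpA : HasDerivAt (fun u => exp (-A u)) (exp (-A s) * -L s) s :=
        (hL.hasDerivAt_primitive hs).neg.exp
      exact ((hexpA.mul (hg' s hs)).sub (hBc.hasDerivAt_primitive hs)).congr_deriv
        (by ring) |>.hasDerivWithinAt
    · exact mul_nonneg (exp_pos _).le (by linarith [hbound s hs])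
  have hends := hmono (left_mem_Icc.2 hab) (right_mem_Icc.2 hab) hab
  simp only [A, B, integral_same, neg_zero, exp_zero, one_mul, sub_zero] at hends
  have hLi : ∀ u ∈ Icc a b, IntervalIntegrable L MeasureTheory.volume a u := fun u hu =>
    (hL.mono (Icc_subset_Icc_right hu.2)).intervalIntegrable_of_Icc hu.1
  have hweight : exp (A b) * B b = ∫ u in a..b, exp (∫ t in u..b, L t) * c u := by
    rw [← integral_const_mul]
    refine integral_congr fun u hu => ?_
    rw [uIcc_of_le hab] at hu
    simp only [A, ← integral_interval_sub_left (hLi b (right_mem_Icc.2 hab)) (hLi u hu), exp_sub,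
      exp_neg]
    field_simp
  rw [← hweight]
  calc exp (A b) * g a + exp (A b) * B b
      ≤ exp (A b) * (exp (-A b) * g b) := by rw [← mul_add]; gcongr; linarith
    _ = g b := by rw [← mul_assoc, ← exp_add, add_neg_cancel, exp_zero, one_mul]

end

theorem stmt_11_general (d : ℕ) (s_c : ℝ) (hs_c : s_c ∈ Set.Ioc (0 : ℝ) 1)
    (μ δ : ℝ)
    (h E : EuclideanSpace ℝ (Fin d) → ℝ)
    (hh : ContDiff ℝ 1 h)
    (f : ℝ → EuclideanSpace ℝ (Fin d) → EuclideanSpace ℝ (Fin d))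
    (β L : ℝ → ℝ)
    (hβ : ContinuousOn β (Set.Icc 0 s_c)) (hβ0 : ∀ s ∈ Set.Icc (0 : ℝ) s_c, 0 ≤ β s)
    (hL : ContinuousOn L (Set.Icc 0 s_c))
    (x : ℝ → EuclideanSpace ℝ (Fin d))
    (hx : ∀ s ∈ Set.Icc (0 : ℝ) s_c,
      HasDerivAt x (f s (x s) + β s • gradient E (x s)) s)
    (halign : ∀ s ∈ Set.Icc (0 : ℝ) s_c, μ ≤ ⟪gradient h (x s), gradient E (x s)⟫)
    (hdrift : ∀ s ∈ Set.Icc (0 : ℝ) s_c, L s * h (x s) ≤ ⟪gradient h (x s), f s (x s)⟫)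
    (hcert : δ ≤ Real.exp (∫ τ in (0 : ℝ)..s_c, L τ) * h (x 0)
      + μ * ∫ u in (0 : ℝ)..s_c, Real.exp (∫ τ in u..s_c, L τ) * β u) :
    δ ≤ h (x s_c) := by
  have hderiv : ∀ s ∈ Icc 0 s_c, HasDerivAt (fun s => h (x s))
      ⟪gradient h (x s), f s (x s) + β s • gradient E (x s)⟫ s := fun s hs =>
    ((hh.differentiable one_ne_zero _).hasGradientAt.hasFDerivAt.comp_hasDerivAt s (hx s hs))
  have hbound : ∀ s ∈ Icc 0 s_c, L s * h (x s) + μ * β s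
      ≤ ⟪gradient h (x s), f s (x s) + β s • gradient E (x s)⟫ := fun s hs => by
    rw [inner_add_right, real_inner_smul_right]
    linarith [hdrift s hs, mul_le_mul_of_nonneg_left (halign s hs) (hβ0 s hs)]
  have hgronwall : Real.exp (∫ τ in (0 : ℝ)..s_c, L τ) * h (x 0)
      + ∫ u in (0 : ℝ)..s_c, Real.exp (∫ τ in u..s_c, L τ) * (μ * β u) ≤ h (x s_c) :=
    exp_integral_mul_add_integral_le_of_hasDerivAt hs_c.1.le hL (continuousOn_const.mul hβ)
      (fun s hs => (hderiv s hs).continuousAt.continuousWithinAt)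
      (fun s hs => hderiv s (Ioo_subset_Icc_self hs))
      (fun s hs => hbound s (Ioo_subset_Icc_self hs))
  simp only [mul_left_comm _ μ, integral_const_mul] at hgronwall
  linarith

/-- Forward-time critical window (sufficient certificate): along the guided flow
`x'(s) = f̃(s, x(s)) + β(s)·∇E(x(s))`, if the alignment `⟪∇h, ∇E⟫ ≥ μ` and the drift
bound `⟪∇h, f̃⟫ ≥ L(s)·h(x(s))` hold on `[0, s_c]`, and
`exp(∫₀^{s_c} L)·h(x(0)) + μ·∫₀^{s_c} exp(∫_u^{s_c} L)·β(u) du ≥ δ`,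
then `h(x(s_c)) ≥ δ`. -/
theorem stmt_11 (d : ℕ) (hd : 0 < d) (s_c : ℝ) (hs_c : s_c ∈ Set.Ioc (0 : ℝ) 1)
    (μ δ : ℝ) (hμ : 0 < μ) (hδ : 0 < δ)
    (h E : EuclideanSpace ℝ (Fin d) → ℝ)
    (hh : ContDiff ℝ 1 h) (hE : ContDiff ℝ 1 E)
    (f : ℝ → EuclideanSpace ℝ (Fin d) → EuclideanSpace ℝ (Fin d))
    (hf : ContinuousOn (Function.uncurry f) (Set.Icc (0 : ℝ) 1 ×ˢ Set.univ))
    (β L : ℝ → ℝ)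
    (hβ : ContinuousOn β (Set.Icc 0 s_c)) (hβ0 : ∀ s ∈ Set.Icc (0 : ℝ) s_c, 0 ≤ β s)
    (hL : ContinuousOn L (Set.Icc 0 s_c)) (hL0 : ∀ s ∈ Set.Icc (0 : ℝ) s_c, 0 ≤ L s)
    (x : ℝ → EuclideanSpace ℝ (Fin d))
    (hx : ∀ s ∈ Set.Icc (0 : ℝ) s_c,
      HasDerivAt x (f s (x s) + β s • gradient E (x s)) s)
    (halign : ∀ s ∈ Set.Icc (0 : ℝ) s_c, μ ≤ ⟪gradient h (x s), gradient E (x s)⟫)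
    (hdrift : ∀ s ∈ Set.Icc (0 : ℝ) s_c, L s * h (x s) ≤ ⟪gradient h (x s), f s (x s)⟫)
    (hcert : δ ≤ Real.exp (∫ τ in (0 : ℝ)..s_c, L τ) * h (x 0)
      + μ * ∫ u in (0 : ℝ)..s_c, Real.exp (∫ τ in u..s_c, L τ) * β u) :
    δ ≤ h (x s_c) :=
  stmt_11_general d s_c hs_c μ δ h E hh f β L hβ hβ0 hL x hx halign hdrift hcert
end

section
/- Earlier guidance is better under a fixed budget. Let s_c ∈ (0, 1], let L : [0, s_c] → ℝ be integrable with L ≥ 0, and let β₁, β₂ : [0, s_c] → ℝ be integrable and nonnegative with equal budgets ∫₀^{s_c} β₁(u) du = ∫₀^{s_c} β₂(u) du. Suppose there exists u* ∈ [0, s_c] such that β₁(u) ≥ β₂(u) for almost every u ∈ [0, u*] and β₁(u) ≤ β₂(u) for almost every u ∈ [u*, s_c] (i.e., β₁ shifts mass of β₂ to earlier times). Then Ī_L(β₁) ≥ Ī_L(β₂), where Ī_L(β) = ∫₀^{s_c} exp(∫_u^{s_c} L(τ) dτ)·β(u) du. -/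
/-!
Put `W u = exp (∫ τ in u..s_c, L τ)` and `δ = β₁ - β₂`. Since `L ≥ 0`, `W` is antitone, so
`W u * δ u ≥ W u* * δ u` on both sides of `u*`: before `u*` both `W u ≥ W u*` and `δ u ≥ 0`,
after it both `W u ≤ W u*` and `δ u ≤ 0`. Integrating and using `∫ δ = 0` gives `∫ W δ ≥ 0`.
-/

open MeasureTheory Set

theorem antitoneOn_integral_of_nonneg {L : ℝ → ℝ} {a b : ℝ}
    (hL : IntervalIntegrable L volume a b) (hL0 : ∀ τ ∈ Icc a b, 0 ≤ L τ) :
    AntitoneOn (fun u => ∫ τ in u..b, L τ) (Icc a b) := by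
  intro x hx y hy hxy
  have hxb : IntervalIntegrable L volume x b :=
    hL.mono_set (uIcc_subset_uIcc (Icc_subset_uIcc hx) right_mem_uIcc)
  refine intervalIntegral.integral_mono_interval hxy hy.2 le_rfl ?_ hxb
  filter_upwards [ae_restrict_mem measurableSet_Ioc] with τ hτ
  exact hL0 τ ⟨hx.1.trans hτ.1.le, hτ.2⟩

theorem integral_mul_nonneg_of_antitoneOn_of_sign_change {W δ : ℝ → ℝ} {a b c : ℝ}
    (hc : c ∈ Icc a b) (hW : AntitoneOn W (Icc a b)) (hWc : ContinuousOn W (Icc a b))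
    (hδ : IntervalIntegrable δ volume a b) (hδ0 : ∫ u in a..b, δ u = 0)
    (hearly : ∀ᵐ u, u ∈ Icc a c → 0 ≤ δ u) (hlate : ∀ᵐ u, u ∈ Icc c b → δ u ≤ 0) :
    0 ≤ ∫ u in a..b, W u * δ u := by
  have hab : a ≤ b := hc.1.trans hc.2
  have hWδ : IntervalIntegrable (fun u => W u * δ u) volume a b :=
    hδ.continuousOn_mul (by rwa [uIcc_of_le hab])
  have hpointwise : ∀ᵐ u ∂volume.restrict (Icc a b), W c * δ u ≤ W u * δ u := by
    filter_upwards [ae_restrict_of_ae hearly, ae_restrict_of_ae hlate,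
      ae_restrict_mem measurableSet_Icc] with u hue hul hu
    rcases le_total u c with huc | hcu
    · exact mul_le_mul_of_nonneg_right (hW hu hc huc) (hue ⟨hu.1, huc⟩)
    · exact mul_le_mul_of_nonpos_right (hW hc hu hcu) (hul ⟨hcu, hu.2⟩)
  calc (0 : ℝ) = ∫ u in a..b, W c * δ u := by
        rw [intervalIntegral.integral_const_mul, hδ0, mul_zero]
    _ ≤ ∫ u in a..b, W u * δ u :=
        intervalIntegral.integral_mono_ae_restrict hab (hδ.const_mul _) hWδ hpointwise

theorem stmt_14_general (s_c : ℝ)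
    (L β₁ β₂ : ℝ → ℝ)
    (hL : IntervalIntegrable L volume 0 s_c)
    (hL0 : ∀ τ ∈ Set.Icc (0 : ℝ) s_c, 0 ≤ L τ)
    (hβ₁ : IntervalIntegrable β₁ volume 0 s_c)
    (hβ₂ : IntervalIntegrable β₂ volume 0 s_c)
    (hbudget : (∫ u in (0 : ℝ)..s_c, β₁ u) = ∫ u in (0 : ℝ)..s_c, β₂ u)
    (u_star : ℝ) (hu_star : u_star ∈ Set.Icc (0 : ℝ) s_c)
    (hearly : ∀ᵐ u ∂volume, u ∈ Set.Icc (0 : ℝ) u_star → β₂ u ≤ β₁ u)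
    (hlate : ∀ᵐ u ∂volume, u ∈ Set.Icc u_star s_c → β₁ u ≤ β₂ u) :
    (∫ u in (0 : ℝ)..s_c, Real.exp (∫ τ in u..s_c, L τ) * β₂ u)
      ≤ ∫ u in (0 : ℝ)..s_c, Real.exp (∫ τ in u..s_c, L τ) * β₁ u := by
  have hs : (0 : ℝ) ≤ s_c := hu_star.1.trans hu_star.2
  have hW : ContinuousOn (fun u => Real.exp (∫ τ in u..s_c, L τ)) (uIcc 0 s_c) :=
    Real.continuous_exp.comp_continuousOn
      (intervalIntegral.continuousOn_primitive_interval_left ((intervalIntegrable_iff').mp hL))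
  have hmass := integral_mul_nonneg_of_antitoneOn_of_sign_change hu_star
    (Real.exp_monotone.comp_antitoneOn (antitoneOn_integral_of_nonneg hL hL0))
    (uIcc_of_le hs ▸ hW)
    (hβ₁.sub hβ₂) (by rw [intervalIntegral.integral_sub hβ₁ hβ₂, hbudget, sub_self])
    (by filter_upwards [hearly] with u hu h using sub_nonneg.mpr (hu h))
    (by filter_upwards [hlate] with u hu h using sub_nonpos.mpr (hu h))
  simp only [Function.comp_apply, mul_sub] at hmass
  rw [intervalIntegral.integral_sub (hβ₁.continuousOn_mul hW) (hβ₂.continuousOn_mul hW)] at hmass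
  exact sub_nonneg.mp hmass

/-- Earlier guidance is better under a fixed budget: if `β₁` shifts mass of `β₂` toward
earlier times (pointwise a.e. `β₁ ≥ β₂` before `u*` and `β₁ ≤ β₂` after `u*`) while
keeping the same budget `∫₀^{s_c} β₁ = ∫₀^{s_c} β₂`, then the weighted guidance mass
`Ī_L(β) = ∫₀^{s_c} exp(∫_u^{s_c} L)·β(u) du` satisfies `Ī_L(β₁) ≥ Ī_L(β₂)`. -/
theorem stmt_14 (s_c : ℝ) (hs_c : s_c ∈ Set.Ioc (0 : ℝ) 1)
    (L β₁ β₂ : ℝ → ℝ)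
    (hL : IntervalIntegrable L volume 0 s_c)
    (hL0 : ∀ τ ∈ Set.Icc (0 : ℝ) s_c, 0 ≤ L τ)
    (hβ₁ : IntervalIntegrable β₁ volume 0 s_c)
    (hβ₂ : IntervalIntegrable β₂ volume 0 s_c)
    (hβ₁0 : ∀ u ∈ Set.Icc (0 : ℝ) s_c, 0 ≤ β₁ u)
    (hβ₂0 : ∀ u ∈ Set.Icc (0 : ℝ) s_c, 0 ≤ β₂ u)
    (hbudget : (∫ u in (0 : ℝ)..s_c, β₁ u) = ∫ u in (0 : ℝ)..s_c, β₂ u)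
    (u_star : ℝ) (hu_star : u_star ∈ Set.Icc (0 : ℝ) s_c)
    (hearly : ∀ᵐ u ∂volume, u ∈ Set.Icc (0 : ℝ) u_star → β₂ u ≤ β₁ u)
    (hlate : ∀ᵐ u ∂volume, u ∈ Set.Icc u_star s_c → β₁ u ≤ β₂ u) :
    (∫ u in (0 : ℝ)..s_c, Real.exp (∫ τ in u..s_c, L τ) * β₂ u)
      ≤ ∫ u in (0 : ℝ)..s_c, Real.exp (∫ τ in u..s_c, L τ) * β₁ u :=
  stmt_14_general s_c L β₁ β₂ hL hL0 hβ₁ hβ₂ hbudget u_star hu_star hearly hlate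
end

section
/- Safe-denoiser decomposition. Let d be a positive integer, let p : ℝ^d → ℝ be a nonnegative integrable function (a data density), let S ⊆ ℝ^d be measurable (the safe set), and let q : ℝ^d → ℝ be a measurable strictly positive function (the diffusion kernel x ↦ q_t(x_t | x) for a fixed x_t). Define Z_safe = ∫_S p, Z_unsafe = ∫_{Sᶜ} p, p_{safe,t} = Z_safe⁻¹ ∫_S p(x) q(x) dx, p_{unsafe,t} = Z_unsafe⁻¹ ∫_{Sᶜ} p(x) q(x) dx, and the denoisers E_data = (∫ x·p(x)q(x) dx)/(∫ p(x)q(x) dx), E_safe = (∫_S x·p(x)q(x) dx)/(∫_S p(x)q(x) dx), E_unsafe = (∫_{Sᶜ} x·p(x)q(x) dx)/(∫_{Sᶜ} p(x)q(x) dx). Assume x ↦ ‖x‖·p(x)·q(x) is integrable, and that ∫_S p(x)q(x) dx > 0 and ∫_{Sᶜ} p(x)q(x) dx > 0 (so Z_safe > 0 and Z_unsafe > 0). Then with β* = (Z_unsafe · p_{unsafe,t})/(Z_safe · p_{safe,t}), one has E_safe = E_data + β*·(E_data − E_unsafe). -/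
/-!
Splitting the integrals over `S` and `Sᶜ` writes the data denoiser as the mixture
`E_data = (A • E_safe + B • E_unsafe) / (A + B)` of the other two, where `A` and `B` are the
posterior masses `∫_S p q` and `∫_{Sᶜ} p q`. The normalizers `Z` cancel in `β*`, which is
therefore `B / A`, and solving the mixture identity for `E_safe` gives the decomposition.
-/

open MeasureTheory

theorem mixture_add_div_smul_sub {K E : Type*} [Field K] [AddCommGroup E] [Module K E]
    {A B : K} (hA : A ≠ 0) (hAB : A + B ≠ 0) (a b : E) :
    (A + B)⁻¹ • (A • a + B • b) + (B / A) • ((A + B)⁻¹ • (A • a + B • b) - b) = a := by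
  match_scalars
  · field_simp
  · field_simp
    ring

theorem integral_pos_of_integral_mul_ne_zero {α : Type*} [MeasurableSpace α] {μ : Measure α}
    {p q : α → ℝ} (hp : 0 ≤ᵐ[μ] p) (hpi : Integrable p μ) (h : ∫ x, p x * q x ∂μ ≠ 0) :
    0 < ∫ x, p x ∂μ := by
  refine (integral_nonneg_of_ae hp).lt_of_ne fun h0 => h ?_
  have hp0 : p =ᵐ[μ] 0 := (integral_eq_zero_iff_of_nonneg_ae hp hpi).mp h0.symm
  refine integral_eq_zero_of_ae ?_
  filter_upwards [hp0] with x hx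
  simp [hx]

theorem MeasureTheory.Integrable.smul_of_norm_mul {α E : Type*} [MeasurableSpace α]
    {μ : Measure α} [NormedAddCommGroup E] [NormedSpace ℝ E] {f : α → ℝ} {g : α → E}
    (hfg : Integrable (fun x => ‖g x‖ * f x) μ) (hf : AEStronglyMeasurable f μ)
    (hg : AEStronglyMeasurable g μ) : Integrable (fun x => f x • g x) μ := by
  refine (integrable_norm_iff (hf.smul hg)).mp ?_
  simpa only [Pi.smul_apply', norm_mul, norm_norm, norm_smul, mul_comm] using hfg.norm

theorem stmt_15_general (d : ℕ)
    (p q : EuclideanSpace ℝ (Fin d) → ℝ)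
    (hp_int : Integrable p)
    (hp_nonneg : ∀ x, 0 ≤ p x)
    (S : Set (EuclideanSpace ℝ (Fin d))) (hS : MeasurableSet S)
    (hpq_int : Integrable (fun x => p x * q x))
    (hxpq_int : Integrable (fun x => ‖x‖ * (p x * q x)))
    (hA : 0 < ∫ x in S, p x * q x)
    (hB : 0 < ∫ x in Sᶜ, p x * q x)
    (Zsafe Zunsafe : ℝ)
    (hZs : Zsafe = ∫ x in S, p x)
    (hZu : Zunsafe = ∫ x in Sᶜ, p x)
    (psafe punsafe : ℝ)
    (hps : psafe = Zsafe⁻¹ * ∫ x in S, p x * q x)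
    (hpu : punsafe = Zunsafe⁻¹ * ∫ x in Sᶜ, p x * q x)
    (Edata Esafe Eunsafe : EuclideanSpace ℝ (Fin d))
    (hEdata : Edata = (∫ x, p x * q x)⁻¹ • ∫ x, (p x * q x) • x)
    (hEsafe : Esafe = (∫ x in S, p x * q x)⁻¹ • ∫ x in S, (p x * q x) • x)
    (hEunsafe : Eunsafe = (∫ x in Sᶜ, p x * q x)⁻¹ • ∫ x in Sᶜ, (p x * q x) • x)
    (βstar : ℝ) (hβstar : βstar = (Zunsafe * punsafe) / (Zsafe * psafe)) :
    Esafe = Edata + βstar • (Edata - Eunsafe) := by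
  set A := ∫ x in S, p x * q x
  set B := ∫ x in Sᶜ, p x * q x
  have hZs_pos : 0 < Zsafe := hZs ▸ integral_pos_of_integral_mul_ne_zero
    (ae_of_all _ hp_nonneg) hp_int.integrableOn hA.ne'
  have hZu_pos : 0 < Zunsafe := hZu ▸ integral_pos_of_integral_mul_ne_zero
    (ae_of_all _ hp_nonneg) hp_int.integrableOn hB.ne'
  have hβ : βstar = B / A := by
    rw [hβstar, hps, hpu]
    field_simp
  have hpq_smul_int : Integrable (fun x => (p x * q x) • x) :=
    hxpq_int.smul_of_norm_mul hpq_int.aestronglyMeasurable aestronglyMeasurable_id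
  have hU : ∫ x in S, (p x * q x) • x = A • Esafe := by rw [hEsafe, smul_inv_smul₀ hA.ne']
  have hV : ∫ x in Sᶜ, (p x * q x) • x = B • Eunsafe := by
    rw [hEunsafe, smul_inv_smul₀ hB.ne']
  have hEdata_mix : Edata = (A + B)⁻¹ • (A • Esafe + B • Eunsafe) := by
    rw [hEdata, ← integral_add_compl hS hpq_int, ← integral_add_compl hS hpq_smul_int, hU, hV]
  rw [hEdata_mix, hβ]
  exact (mixture_add_div_smul_sub hA.ne' (add_pos hA hB).ne' Esafe Eunsafe).symm

/-- Safe-denoiser decomposition: with a nonnegative integrable data density `p`, a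
measurable safe set `S`, a strictly positive measurable diffusion kernel `q`, partition
masses `Z_safe = ∫_S p`, `Z_unsafe = ∫_{Sᶜ} p`, marginals
`p_safe = Z_safe⁻¹ ∫_S p·q`, `p_unsafe = Z_unsafe⁻¹ ∫_{Sᶜ} p·q`, and denoisers
`E_data`, `E_safe`, `E_unsafe` (the corresponding posterior means), setting
`β* = (Z_unsafe·p_unsafe)/(Z_safe·p_safe)` gives
`E_safe = E_data + β*·(E_data − E_unsafe)`. -/
theorem stmt_15 (d : ℕ) (hd : 0 < d)
    (p q : EuclideanSpace ℝ (Fin d) → ℝ)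
    (hp_meas : Measurable p) (hq_meas : Measurable q)
    (hp_int : Integrable p)
    (hp_nonneg : ∀ x, 0 ≤ p x) (hq_pos : ∀ x, 0 < q x)
    (S : Set (EuclideanSpace ℝ (Fin d))) (hS : MeasurableSet S)
    (hpq_int : Integrable (fun x => p x * q x))
    (hxpq_int : Integrable (fun x => ‖x‖ * (p x * q x)))
    (hA : 0 < ∫ x in S, p x * q x)
    (hB : 0 < ∫ x in Sᶜ, p x * q x)
    (Zsafe Zunsafe : ℝ)
    (hZs : Zsafe = ∫ x in S, p x)
    (hZu : Zunsafe = ∫ x in Sᶜ, p x)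
    (psafe punsafe : ℝ)
    (hps : psafe = Zsafe⁻¹ * ∫ x in S, p x * q x)
    (hpu : punsafe = Zunsafe⁻¹ * ∫ x in Sᶜ, p x * q x)
    (Edata Esafe Eunsafe : EuclideanSpace ℝ (Fin d))
    (hEdata : Edata = (∫ x, p x * q x)⁻¹ • ∫ x, (p x * q x) • x)
    (hEsafe : Esafe = (∫ x in S, p x * q x)⁻¹ • ∫ x in S, (p x * q x) • x)
    (hEunsafe : Eunsafe = (∫ x in Sᶜ, p x * q x)⁻¹ • ∫ x in Sᶜ, (p x * q x) • x)
    (βstar : ℝ) (hβstar : βstar = (Zunsafe * punsafe) / (Zsafe * psafe)) :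
    Esafe = Edata + βstar • (Edata - Eunsafe) :=
  stmt_15_general d p q hp_int hp_nonneg S hS hpq_int hxpq_int hA hB Zsafe Zunsafe hZs hZu psafe
    punsafe hps hpu Edata Esafe Eunsafe hEdata hEsafe hEunsafe βstar hβstar
end
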